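/- arXiv:1410.4347 — 3 statements merged into one kernel-verified Lean document; each statement's English description precedes it below -/
import Mathlib

section
/- Fix natural numbers k and m, a tuple λ : Fin k → ℝ, and let E = (Fin k → ℝ) × (Fin k → ℝ) × (Fin m → ℝ). For τ ∈ ℝ let B_τ : E → E be the linear boost B_τ(u, v, x) = ((e^{λ_i τ} u_i)_i, (e^{-λ_i τ} v_i)_i, x). For a field of bilinear forms g : E → (E → E → ℝ) (with g(p) bilinear for each p), define the pullback (Φ_τ g)(p)(w, w') = g(B_τ p)(B_τ w, B_τ w'). Suppose g₀ : E → (E → E → ℝ) is such that for all p, w, w' ∈ E, (Φ_τ g)(p)(w, w') converges to g₀(p)(w, w') as τ → +∞. Then for every τ ∈ ℝ and all p, w, w' ∈ E one has (Φ_τ g₀)(p)(w, w') = g₀(p)(w, w'); i.e., the limiting bilinear-form field g₀ is invariant under every boost B_τ. -/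
open Real Filter Topology

/-- The linear boost `B_τ` on `E = (Fin k → ℝ) × (Fin k → ℝ) × (Fin m → ℝ)`:
`B_τ(u, v, x) = ((e^{λ_i τ} u_i)_i, (e^{-λ_i τ} v_i)_i, x)`. -/
noncomputable def linBoost (k m : ℕ) (lam : Fin k → ℝ) (τ : ℝ) :
    (Fin k → ℝ) × (Fin k → ℝ) × (Fin m → ℝ) →
      (Fin k → ℝ) × (Fin k → ℝ) × (Fin m → ℝ) :=
  fun p =>
    (fun i => Real.exp (lam i * τ) * p.1 i,
     fun i => Real.exp (-(lam i) * τ) * p.2.1 i,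
     p.2.2)

/-- Proposition 1 of the paper, concretely: if the pullback
`(Φ_τ g)(p)(w, w') = g(B_τ p)(B_τ w, B_τ w')` of a field of bilinear forms `g` converges
pointwise to `g₀` as `τ → +∞`, then `g₀` is invariant under every boost `B_τ`:
`(Φ_τ g₀)(p)(w, w') = g₀(p)(w, w')`. -/
theorem boost_limit_metric_is_boost_invariant (k m : ℕ) (lam : Fin k → ℝ)
    (g g₀ : (Fin k → ℝ) × (Fin k → ℝ) × (Fin m → ℝ) →
      ((Fin k → ℝ) × (Fin k → ℝ) × (Fin m → ℝ)) →ₗ[ℝ]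
        ((Fin k → ℝ) × (Fin k → ℝ) × (Fin m → ℝ)) →ₗ[ℝ] ℝ)
    (hlim : ∀ p w w' : (Fin k → ℝ) × (Fin k → ℝ) × (Fin m → ℝ),
      Tendsto (fun τ : ℝ =>
          g (linBoost k m lam τ p) (linBoost k m lam τ w) (linBoost k m lam τ w'))
        atTop (𝓝 (g₀ p w w'))) :
    ∀ (τ : ℝ) (p w w' : (Fin k → ℝ) × (Fin k → ℝ) × (Fin m → ℝ)),
      g₀ (linBoost k m lam τ p) (linBoost k m lam τ w) (linBoost k m lam τ w')
        = g₀ p w w' := by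
  have hcomp : ∀ (σ τ : ℝ) (p : (Fin k → ℝ) × (Fin k → ℝ) × (Fin m → ℝ)),
      linBoost k m lam σ (linBoost k m lam τ p) = linBoost k m lam (σ + τ) p := by
    intro σ τ p
    simp only [linBoost, Prod.mk.injEq]
    refine ⟨funext fun i => ?_, funext fun i => ?_, trivial⟩
    · rw [← mul_assoc, ← Real.exp_add]; ring_nf
    · rw [← mul_assoc, ← Real.exp_add]; ring_nf
  intro τ p w w'
  have h1 : Tendsto (fun σ : ℝ =>
      g (linBoost k m lam (σ + τ) p) (linBoost k m lam (σ + τ) w)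
        (linBoost k m lam (σ + τ) w')) atTop
      (𝓝 (g₀ (linBoost k m lam τ p) (linBoost k m lam τ w) (linBoost k m lam τ w'))) := by
    have := hlim (linBoost k m lam τ p) (linBoost k m lam τ w) (linBoost k m lam τ w')
    simpa only [hcomp] using this
  have h2 : Tendsto (fun σ : ℝ =>
      g (linBoost k m lam (σ + τ) p) (linBoost k m lam (σ + τ) w)
        (linBoost k m lam (σ + τ) w')) atTop (𝓝 (g₀ p w w')) :=
    (hlim p w w').comp (tendsto_atTop_add_const_right atTop τ tendsto_id)
  exact tendsto_nhds_unique h1 h2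
end

section
/- Let λ > 0 and c ≥ 0 be real numbers and let f : ℝ → ℝ be infinitely differentiable (ContDiff ℝ ⊤). Suppose that for every natural number n and every v₀ ∈ ℝ there exists L ∈ ℝ such that the function τ ↦ e^{(n λ − c) τ} · f^{(n)}(v₀) converges to L as τ → +∞, where f^{(n)} denotes the n-th iterated derivative of f. Then f is a polynomial function of degree at most c/λ: there exists a polynomial P with real coefficients such that f(x) = P(x) for all x ∈ ℝ and the natural degree of P, viewed as a real number, is at most c/λ. -/
open Real Filter Topology Polynomial

noncomputable def antider (Q : Polynomial ℝ) : Polynomial ℝ :=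
  Q.sum fun i a => C (a / (i + 1)) * X ^ (i + 1)

lemma antider_derivative (Q : Polynomial ℝ) : (antider Q).derivative = Q := by
  unfold antider
  rw [Polynomial.sum, derivative_sum]
  conv_rhs => rw [← Polynomial.sum_C_mul_X_pow_eq Q, Polynomial.sum]
  refine Finset.sum_congr rfl fun i _ => ?_
  rw [derivative_C_mul, derivative_X_pow]
  push_cast
  rw [← mul_assoc, ← C_mul, div_mul_cancel₀ _ (by positivity : (i:ℝ)+1 ≠ 0)]

lemma antider_degree {Q : Polynomial ℝ} {N : ℕ} (h : Q.degree < N) :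
    (antider Q).degree < (N + 1 : ℕ) := by
  unfold antider
  rw [Polynomial.sum]
  refine lt_of_le_of_lt (degree_sum_le _ _) ?_
  rw [Finset.sup_lt_iff (by exact_mod_cast WithBot.bot_lt_coe _)]
  intro i hi
  refine lt_of_le_of_lt (degree_C_mul_X_pow_le _ _) ?_
  have hQ : Q ≠ 0 := fun h0 => by simp [h0] at hi
  have hi' : i ≤ Q.natDegree := le_natDegree_of_mem_supp i hi
  have : Q.natDegree < N := by
    rwa [← natDegree_lt_iff_degree_lt hQ] at h
  exact_mod_cast Nat.add_lt_add_right (lt_of_le_of_lt hi' this) 1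

lemma poly_of_iteratedDeriv_zero : ∀ (N : ℕ) (f : ℝ → ℝ), ContDiff ℝ (⊤ : ℕ∞) f →
    iteratedDeriv N f = 0 → ∃ P : Polynomial ℝ,
      (∀ x, f x = P.eval x) ∧ P.degree < (N : ℕ) := by
  intro N
  induction N with
  | zero =>
    intro f hf h
    refine ⟨0, fun x => ?_, by simpa using WithBot.bot_lt_coe 0⟩
    simpa using congrFun h x
  | succ N ih =>
    intro f hf h
    rw [iteratedDeriv_succ'] at h
    obtain ⟨Q, hQeq, hQdeg⟩ := ih (deriv f) ((contDiff_infty_iff_deriv.mp hf).2) h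
    set A := antider Q with hA
    have hfd : Differentiable ℝ f := hf.differentiable (by simp)
    have hconst : ∀ x y : ℝ, f x - A.eval x = (f y - A.eval y) := by
      apply is_const_of_deriv_eq_zero
      · exact hfd.sub (Polynomial.differentiable A)
      · intro x
        rw [deriv_fun_sub (hfd x) (Polynomial.differentiable A x), Polynomial.deriv,
          antider_derivative, hQeq, sub_self]
    refine ⟨A + C (f 0 - A.eval 0), fun x => ?_, ?_⟩
    · have := hconst x 0
      simp only [eval_add, eval_C]
      linarith
    · refine lt_of_le_of_lt (degree_add_le _ _) (max_lt (antider_degree hQdeg) ?_)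
      exact lt_of_le_of_lt (degree_C_le) (by exact_mod_cast WithBot.coe_lt_coe.mpr (Nat.succ_pos N))

/-- If `λ > 0`, `c ≥ 0`, `f` is smooth, and for every `n` and `v₀` the function
`τ ↦ e^{(nλ − c)τ} f⁽ⁿ⁾(v₀)` converges as `τ → +∞`, then `f` is a polynomial function
of degree at most `c/λ`. (This is the step bounding the `v`-dependence of the metric
coefficients of an ℐ-degenerate metric by polynomials of bounded degree.) -/
theorem polynomial_of_boost_limits (lam c : ℝ) (hlam : 0 < lam) (hc : 0 ≤ c)
    (f : ℝ → ℝ) (hf : ContDiff ℝ (⊤ : ℕ∞) f)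
    (hlim : ∀ (n : ℕ) (v₀ : ℝ), ∃ L : ℝ,
      Tendsto (fun τ : ℝ => Real.exp ((n * lam - c) * τ) * iteratedDeriv n f v₀)
        atTop (𝓝 L)) :
    ∃ P : Polynomial ℝ, (∀ x : ℝ, f x = P.eval x) ∧ (P.natDegree : ℝ) ≤ c / lam := by
  set N := Nat.floor (c / lam) + 1 with hN
  have hdpos : 0 < (N : ℝ) * lam - c := by
    have h1 : c / lam < N := by exact_mod_cast Nat.lt_floor_add_one (c / lam)
    have := (div_lt_iff₀ hlam).mp h1
    linarith [this]
  have hzero : iteratedDeriv N f = 0 := by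
    funext v₀
    obtain ⟨L, hL⟩ := hlim N v₀
    set d := (N : ℝ) * lam - c with hd
    have hneg : Tendsto (fun τ : ℝ => Real.exp (-d * τ)) atTop (𝓝 0) := by
      apply Real.tendsto_exp_atBot.comp
      exact Tendsto.const_mul_atTop_of_neg (neg_neg_of_pos hdpos) tendsto_id
    have hprod := hneg.mul hL
    have heq : (fun τ : ℝ => Real.exp (-d * τ) *
        (Real.exp (d * τ) * iteratedDeriv N f v₀)) =
        fun _ => iteratedDeriv N f v₀ := by
      funext τ
      rw [← mul_assoc, ← Real.exp_add]
      ring_nf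
      simp
    rw [heq, zero_mul] at hprod
    exact (tendsto_nhds_unique hprod tendsto_const_nhds).symm
  obtain ⟨P, hPeq, hPdeg⟩ := poly_of_iteratedDeriv_zero N f (hf.of_le (by simp)) hzero
  refine ⟨P, hPeq, ?_⟩
  have hle : P.natDegree ≤ Nat.floor (c / lam) := by
    by_cases hP : P = 0
    · simp [hP]
    · have := (natDegree_lt_iff_degree_lt hP).mpr hPdeg
      omega
  calc (P.natDegree : ℝ) ≤ (Nat.floor (c / lam) : ℝ) := by exact_mod_cast hle
    _ ≤ c / lam := Nat.floor_le (div_nonneg hc hlam.le)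
end

section
/- Let E = (Fin 3 → ℝ) × (Fin 3 → ℝ) with points written (u, v) and tangent vectors written (a, b). Define the field of symmetric bilinear forms g : E → (E → E → ℝ) by g(u,v)((a,b),(a',b')) = Σ_{i=1}^{3} (a_i b'_i + a'_i b_i) + 2 v₂ a₁ a'₁ + 2 v₃ a₂ a'₂ + 2 v₁⁷ a₃ a'₃ (this is the metric ds² = 2du₁(dv₁ + v₂du₁) + 2du₂(dv₂ + v₃du₂) + 2du₃(dv₃ + v₁⁷du₃)). For λ = (1, 2, 4) and τ ∈ ℝ let B_τ : E → E be the linear boost B_τ(u, v) = ((e^{−λ_i τ} u_i)_i, (e^{λ_i τ} v_i)_i), and define the pullback (Φ_τ g)(p)(w, w') = g(B_τ p)(B_τ w, B_τ w'). Then for all p, w, w' ∈ E, (Φ_τ g)(p)(w, w') converges as τ → +∞ to g₁(p)(w, w'), where g₁(u,v)((a,b),(a',b')) = Σ_{i=1}^{3} (a_i b'_i + a'_i b_i) + 2 v₂ a₁ a'₁ + 2 v₃ a₂ a'₂ (the metric 2du₁(dv₁ + v₂du₁) + 2du₂(dv₂ + v₃du₂) + 2du₃dv₃). -/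
/-! The boost multiplies each monomial of the metric by `e^{kτ}`, `k` its boost weight.
The terms `du_i dv_i` and `v₂ du₁²`, `v₃ du₂²` have weight `0` (as `λ₂ = 2λ₁`, `λ₃ = 2λ₂`),
while `v₁⁷ du₃²` has weight `7λ₁ - 2λ₃ = -1` and so dies off like `e^{-τ}`. -/

open Real Filter Topology

/-- The metric `ds² = 2du₁(dv₁ + v₂du₁) + 2du₂(dv₂ + v₃du₂) + 2du₃(dv₃ + v₁⁷du₃)` as a
field of bilinear forms on `E = (Fin 3 → ℝ) × (Fin 3 → ℝ)`; points are `(u, v)` and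
tangent vectors `(a, b)`. -/
noncomputable def gVSI : ((Fin 3 → ℝ) × (Fin 3 → ℝ)) → ((Fin 3 → ℝ) × (Fin 3 → ℝ)) →
    ((Fin 3 → ℝ) × (Fin 3 → ℝ)) → ℝ :=
  fun p w w' =>
    (∑ i : Fin 3, (w.1 i * w'.2 i + w'.1 i * w.2 i))
      + 2 * p.2 1 * w.1 0 * w'.1 0
      + 2 * p.2 2 * w.1 1 * w'.1 1
      + 2 * (p.2 0) ^ 7 * w.1 2 * w'.1 2

/-- The limiting metric `2du₁(dv₁ + v₂du₁) + 2du₂(dv₂ + v₃du₂) + 2du₃dv₃`. -/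
noncomputable def gVSIlimit : ((Fin 3 → ℝ) × (Fin 3 → ℝ)) → ((Fin 3 → ℝ) × (Fin 3 → ℝ)) →
    ((Fin 3 → ℝ) × (Fin 3 → ℝ)) → ℝ :=
  fun p w w' =>
    (∑ i : Fin 3, (w.1 i * w'.2 i + w'.1 i * w.2 i))
      + 2 * p.2 1 * w.1 0 * w'.1 0
      + 2 * p.2 2 * w.1 1 * w'.1 1

/-- The linear boost `B_τ(u, v) = ((e^{−λ_i τ} u_i)_i, (e^{λ_i τ} v_i)_i)` with
boost vector `λ = (1, 2, 4)`. -/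
noncomputable def boost124 (τ : ℝ) :
    ((Fin 3 → ℝ) × (Fin 3 → ℝ)) → ((Fin 3 → ℝ) × (Fin 3 → ℝ)) :=
  fun p =>
    (fun i => Real.exp (-(![(1 : ℝ), 2, 4] i) * τ) * p.1 i,
     fun i => Real.exp ((![(1 : ℝ), 2, 4] i) * τ) * p.2 i)

variable (τ : ℝ) (p w w' : (Fin 3 → ℝ) × (Fin 3 → ℝ))

lemma gVSI_eq_gVSIlimit_add :
    gVSI p w w' = gVSIlimit p w w' + 2 * (p.2 0) ^ 7 * w.1 2 * w'.1 2 := rfl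

lemma gVSIlimit_boost124 :
    gVSIlimit (boost124 τ p) (boost124 τ w) (boost124 τ w') = gVSIlimit p w w' := by
  have e2 : exp (2 * τ) = exp τ ^ 2 := by rw [← exp_nat_mul]; norm_num
  have e4 : exp (4 * τ) = exp τ ^ 4 := by rw [← exp_nat_mul]; norm_num
  simp only [gVSIlimit, boost124, Fin.sum_univ_three, Matrix.cons_val_zero,
    Matrix.cons_val_one, Matrix.cons_val_two, Matrix.head_cons, Matrix.tail_cons, neg_mul,
    exp_neg, one_mul, e2, e4]
  field_simp

lemma gVSI_boost124 :
    gVSI (boost124 τ p) (boost124 τ w) (boost124 τ w')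
      = gVSIlimit p w w' + 2 * (p.2 0) ^ 7 * w.1 2 * w'.1 2 * exp (-τ) := by
  have e4 : exp (4 * τ) = exp τ ^ 4 := by rw [← exp_nat_mul]; norm_num
  rw [gVSI_eq_gVSIlimit_add, gVSIlimit_boost124]
  simp only [boost124, Matrix.cons_val_zero, Matrix.cons_val_two, Matrix.tail_cons,
    Matrix.head_cons, neg_mul, exp_neg, one_mul, e4]
  field_simp

/-- The boost limit with boost vector `(1,2,4)`: the pullback of the metric
`2du₁(dv₁ + v₂du₁) + 2du₂(dv₂ + v₃du₂) + 2du₃(dv₃ + v₁⁷du₃)` converges pointwise, as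
`τ → +∞`, to `2du₁(dv₁ + v₂du₁) + 2du₂(dv₂ + v₃du₂) + 2du₃dv₃`. -/
theorem boost_limit_VSI_step1 :
    ∀ p w w' : (Fin 3 → ℝ) × (Fin 3 → ℝ),
      Tendsto
        (fun τ : ℝ => gVSI (boost124 τ p) (boost124 τ w) (boost124 τ w'))
        atTop (𝓝 (gVSIlimit p w w')) := by
  intro p w w'
  simp_rw [gVSI_boost124]
  simpa using tendsto_const_nhds.add
    (tendsto_const_nhds.mul tendsto_exp_neg_atTop_nhds_zero)
end
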